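/- Let $k$ be an algebraically closed field with $\mathrm{char}(k)=3$, $A=k[[t^3]]\subset B=k[[t]]$, and let $V\subset B$ be an $A$-submodule with $B/V\cong k$ as $k$-vector spaces. Then in $B\otimes_A B$, with $\delta=t\otimes 1-1\otimes t$: (a) $\delta^2\notin V\otimes_A B$; (b) $\delta^2 t\in V\otimes_A B$ if and only if $\{t,t^2\}\subset V$; (c) $\delta^2 t^2\in V\otimes_A B$ if and only if $t^2\in V$; (d) $\delta^2 t^3\in V\otimes_A B$. -/

import Mathlib

/-!
Statement 17: Let `k` be an algebraically closed field with `char k = 3`,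
`A = k[[t³]] ⊆ B = k[[t]]`, and let `V ⊆ B` be an `A`-submodule with `B/V ≅ k` as
`k`-vector spaces. Then in `B ⊗_A B`, with `δ = t⊗1 - 1⊗t`:
(a) `δ² ∉ V ⊗_A B`; (b) `δ²t ∈ V ⊗_A B ↔ {t, t²} ⊆ V`;
(c) `δ²t² ∈ V ⊗_A B ↔ t² ∈ V`; (d) `δ²t³ ∈ V ⊗_A B`.
(Here `δ²tⁱ` denotes `δ² · (1 ⊗ tⁱ)`, as in the source computation, and `V ⊗_A B`
denotes the image of `V ⊗_A B → B ⊗_A B`.)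
-/

open scoped TensorProduct

set_option synthInstance.maxHeartbeats 1000000
set_option maxHeartbeats 1000000

noncomputable section

/-- The subalgebra `A = k[[t³]] ⊆ k[[t]]`: power series supported in degrees divisible
by `3`. -/
def cubesSubalgebra (k : Type) [Field k] : Subalgebra k (PowerSeries k) where
  carrier := {f | ∀ n : ℕ, ¬ (3 ∣ n) → PowerSeries.coeff (R := k) n f = 0}
  add_mem' := by
    intro f g hf hg n hn
    simp [map_add, hf n hn, hg n hn]
  mul_mem' := by
    intro f g hf hg n hn
    rw [PowerSeries.coeff_mul]
    refine Finset.sum_eq_zero fun ij hij => ?_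
    have hsum := Finset.HasAntidiagonal.mem_antidiagonal.mp hij
    by_cases h1 : (3 : ℕ) ∣ ij.1
    · have h2 : ¬ (3 : ℕ) ∣ ij.2 := fun h2 => hn (hsum ▸ dvd_add h1 h2)
      rw [hg ij.2 h2, mul_zero]
    · rw [hf ij.1 h1, zero_mul]
  algebraMap_mem' := by
    intro a n hn
    have hn0 : n ≠ 0 := fun h => hn (h ▸ dvd_zero 3)
    simp [PowerSeries.algebraMap_apply, PowerSeries.coeff_C, hn0]

/-- `δ = t ⊗ 1 - 1 ⊗ t` in `k[[t]] ⊗_{k[[t³]]} k[[t]]`. -/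
def deltaTensor (k : Type) [Field k] :
    PowerSeries k ⊗[cubesSubalgebra k] PowerSeries k :=
  PowerSeries.X ⊗ₜ[cubesSubalgebra k] 1 - 1 ⊗ₜ[cubesSubalgebra k] PowerSeries.X

/-- The image of `V ⊗_A B` in `B ⊗_A B`. -/
def tensorImage (k : Type) [Field k]
    (V : Submodule (cubesSubalgebra k) (PowerSeries k)) :
    Submodule (cubesSubalgebra k)
      (PowerSeries k ⊗[cubesSubalgebra k] PowerSeries k) :=
  LinearMap.range (TensorProduct.map V.subtype
    (LinearMap.id : PowerSeries k →ₗ[cubesSubalgebra k] PowerSeries k))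

/-!
Because `B/V` is one-dimensional, `t³ ∈ A` acts on it by a scalar `c`; for `c ≠ 0` the unit
`t³ - c` of `B` would kill `B/V`, so `c = 0`, i.e. `t³B ⊆ V`. Hence `A` acts on `B/V` through
its constant coefficient, and for `j < 3` the maps `b ⊗ b' ↦ coeff_j(b') • [b]` are well-defined
`A`-linear maps `B ⊗_A B → B/V` vanishing on `V ⊗_A B`. In characteristic `3`,
`δ² = t² ⊗ 1 + t ⊗ t + 1 ⊗ t²`, so `δ² (1 ⊗ tⁱ) = ∑_{m ≤ 2} tᵐ ⊗ t^(i+2-m)`. The maps above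
detect the terms with `i ≤ m`, and the others lie in `V ⊗_A B` after moving `t³` across the
tensor sign. So `δ² (1 ⊗ tⁱ) ∈ V ⊗_A B` iff `tᵐ ∈ V` for `i ≤ m ≤ 2`; for `i = 0` this would
force `V = B`.
-/

section OneDimensionalQuotient

variable {k R M : Type*} [Field k] [CommRing R] [Algebra k R] [AddCommGroup M] [Module R M]
  [Module k M] [IsScalarTower k R M]

theorem exists_smul_eq_smul_of_linearEquiv_field {Q : Type*} [AddCommGroup Q] [Module R Q]
    [Module k Q] [IsScalarTower k R Q] (e : Q ≃ₗ[k] k) (r : R) :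
    ∃ c : k, ∀ q : Q, r • q = c • q := by
  refine ⟨e (r • e.symm 1), fun q => e.injective ?_⟩
  have hq : q = e q • e.symm 1 := by rw [← map_smul, smul_eq_mul, mul_one, e.symm_apply_apply]
  conv_lhs => rw [hq]
  rw [smul_comm, e.map_smul, e.map_smul, smul_eq_mul, smul_eq_mul, mul_comm]

theorem Submodule.smul_mem_of_quotient_equiv_field (V : Submodule R M)
    (e : (M ⧸ V.restrictScalars k) ≃ₗ[k] k) (r : R)
    (hr : ∀ c : k, c ≠ 0 → Function.Surjective fun m : M => (r - algebraMap k R c) • m)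
    (m : M) : r • m ∈ V := by
  let e' : (M ⧸ V) ≃ₗ[k] k := (Submodule.Quotient.restrictScalarsEquiv k V).symm.trans e
  have : Nontrivial (M ⧸ V) := e'.symm.injective.nontrivial
  obtain ⟨c, hc⟩ := exists_smul_eq_smul_of_linearEquiv_field e' r
  obtain rfl : c = 0 := by
    by_contra hc0
    obtain ⟨q, hq⟩ := exists_ne (0 : M ⧸ V)
    obtain ⟨m, rfl⟩ := Submodule.Quotient.mk_surjective V q
    obtain ⟨m', rfl⟩ := hr c hc0 m
    rw [Submodule.Quotient.mk_smul, sub_smul, algebraMap_smul, hc, sub_self] at hq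
    exact hq rfl
  rw [← Submodule.Quotient.mk_eq_zero, Submodule.Quotient.mk_smul, hc, zero_smul]

end OneDimensionalQuotient

namespace cubesSubalgebra

open PowerSeries Algebra.TensorProduct

variable {k : Type} [Field k]

theorem X_pow_three_mem : (X : k⟦X⟧) ^ 3 ∈ cubesSubalgebra k := by
  intro n hn
  have : n ≠ 3 := by rintro rfl; exact hn (dvd_refl 3)
  simp [coeff_X_pow, this]

theorem X_pow_three_dvd_sub_C (a : cubesSubalgebra k) :
    X ^ 3 ∣ (a : k⟦X⟧) - C (coeff 0 (a : k⟦X⟧)) := by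
  rw [X_pow_dvd_iff]
  intro m hm
  interval_cases m
  · simp
  · simpa [coeff_C] using a.2 1 (by decide)
  · simpa [coeff_C] using a.2 2 (by decide)

theorem coeff_mul_of_lt_three (a : cubesSubalgebra k) (b : k⟦X⟧) {j : ℕ} (hj : j < 3) :
    coeff j ((a : k⟦X⟧) * b) = coeff 0 (a : k⟦X⟧) * coeff j b := by
  obtain ⟨d, hd⟩ := X_pow_three_dvd_sub_C a
  have : (a : k⟦X⟧) * b = X ^ 3 * (d * b) + C (coeff 0 (a : k⟦X⟧)) * b := by
    rw [← mul_assoc, ← hd]; ring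
  rw [this, map_add, coeff_X_pow_mul', coeff_C_mul, if_neg (by omega), zero_add]

theorem X_pow_three_mul_mem (V : Submodule (cubesSubalgebra k) k⟦X⟧)
    (e : (k⟦X⟧ ⧸ V.restrictScalars k) ≃ₗ[k] k) (b : k⟦X⟧) :
    X ^ 3 * b ∈ V := by
  refine V.smul_mem_of_quotient_equiv_field e ⟨X ^ 3, X_pow_three_mem⟩ (fun c hc m => ?_) b
  have hu : IsUnit ((X : k⟦X⟧) ^ 3 - C c) := by
    simpa [isUnit_iff_constantCoeff] using hc
  refine ⟨hu.unit⁻¹ * m, ?_⟩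
  change ((X : k⟦X⟧) ^ 3 - C c) * (hu.unit⁻¹ * m) = m
  rw [← mul_assoc, hu.mul_val_inv, one_mul]

variable {V : Submodule (cubesSubalgebra k) k⟦X⟧}

theorem smul_mk_eq_coeff_zero_smul (hV3 : ∀ b : k⟦X⟧, X ^ 3 * b ∈ V) (a : cubesSubalgebra k)
    (b : k⟦X⟧) :
    a • (Submodule.Quotient.mk b : k⟦X⟧ ⧸ V) = coeff 0 (a : k⟦X⟧) • Submodule.Quotient.mk b := by
  rw [← Submodule.Quotient.mk_smul, ← Submodule.Quotient.mk_smul, Submodule.Quotient.eq]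
  obtain ⟨d, hd⟩ := X_pow_three_dvd_sub_C a
  have : a • b - coeff 0 (a : k⟦X⟧) • b = X ^ 3 * (d * b) := by
    rw [Subalgebra.smul_def, smul_eq_mul, smul_eq_C_mul, ← sub_mul, hd, mul_assoc]
  exact this ▸ hV3 _

theorem eq_top_of_X_pow_mem (hV3 : ∀ b : k⟦X⟧, X ^ 3 * b ∈ V)
    (h : ∀ m ∈ Finset.range 3, X ^ m ∈ V) : V = ⊤ := by
  refine eq_top_iff.mpr fun b _ => ?_
  obtain ⟨d, hd⟩ : X ^ 3 ∣ b - ∑ m ∈ Finset.range 3, coeff m b • X ^ m := by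
    rw [X_pow_dvd_iff]
    intro n hn
    simp [coeff_X_pow, hn]
  rw [← sub_add_cancel b (∑ m ∈ Finset.range 3, coeff m b • X ^ m), hd]
  exact add_mem (hV3 d) (Submodule.sum_mem _ fun m hm => Submodule.smul_of_tower_mem _ _ (h m hm))

def tensorCoeff (hV3 : ∀ b : k⟦X⟧, X ^ 3 * b ∈ V) (j : ℕ) (hj : j < 3) :
    k⟦X⟧ ⊗[cubesSubalgebra k] k⟦X⟧ →ₗ[cubesSubalgebra k] k⟦X⟧ ⧸ V :=
  TensorProduct.lift <| LinearMap.mk₂ (cubesSubalgebra k)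
    (fun b b' => coeff j b' • Submodule.Quotient.mk b)
    (fun b₁ b₂ b' => by rw [Submodule.Quotient.mk_add, smul_add])
    (fun a b b' => by rw [Submodule.Quotient.mk_smul, smul_comm])
    (fun b b₁ b₂ => by rw [map_add, add_smul])
    (fun a b b' => by
      rw [Subalgebra.smul_def, smul_eq_mul, coeff_mul_of_lt_three a b' hj, mul_smul,
        smul_comm a, smul_mk_eq_coeff_zero_smul hV3, smul_comm])

theorem tensorCoeff_tmul (hV3 : ∀ b : k⟦X⟧, X ^ 3 * b ∈ V) (j : ℕ) (hj : j < 3) (b b' : k⟦X⟧) :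
    tensorCoeff hV3 j hj (b ⊗ₜ b') = coeff j b' • Submodule.Quotient.mk b :=
  rfl

/- `B ⊗_A B` carries two defeq but syntactically different `A`-module structures
(`TensorProduct.instModule` and `Subalgebra.moduleLeft`), which keeps the simp lemmas about
`TensorProduct.map` from firing; hence the `change`. -/
theorem tensorCoeff_comp_map_subtype (hV3 : ∀ b : k⟦X⟧, X ^ 3 * b ∈ V) (j : ℕ) (hj : j < 3) :
    tensorCoeff hV3 j hj ∘ₗ TensorProduct.map V.subtype LinearMap.id = 0 :=
  TensorProduct.ext' fun v b => by
    change tensorCoeff hV3 j hj ((v : k⟦X⟧) ⊗ₜ b) = 0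
    rw [tensorCoeff_tmul, (Submodule.Quotient.mk_eq_zero V).mpr v.2, smul_zero]

theorem tensorCoeff_eq_zero_of_mem (hV3 : ∀ b : k⟦X⟧, X ^ 3 * b ∈ V) (j : ℕ) (hj : j < 3)
    {z : k⟦X⟧ ⊗[cubesSubalgebra k] k⟦X⟧} (hz : z ∈ tensorImage k V) :
    tensorCoeff hV3 j hj z = 0 := by
  obtain ⟨y, rfl⟩ := LinearMap.mem_range.mp hz
  exact LinearMap.congr_fun (tensorCoeff_comp_map_subtype hV3 j hj) y

theorem tmul_mem_tensorImage {v : k⟦X⟧} (hv : v ∈ V) (b : k⟦X⟧) :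
    v ⊗ₜ[cubesSubalgebra k] b ∈ tensorImage k V :=
  LinearMap.mem_range.mpr ⟨⟨v, hv⟩ ⊗ₜ b, rfl⟩

theorem X_pow_tmul_X_pow_mem (hV3 : ∀ b : k⟦X⟧, X ^ 3 * b ∈ V) {m n : ℕ}
    (h : X ^ m ∈ V ∨ 3 ≤ n) :
    ((X : k⟦X⟧) ^ m) ⊗ₜ[cubesSubalgebra k] ((X : k⟦X⟧) ^ n) ∈ tensorImage k V := by
  rcases h with hm | hn
  · exact tmul_mem_tensorImage hm _
  obtain ⟨n, rfl⟩ := Nat.exists_eq_add_of_le' hn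
  have hshift := TensorProduct.smul_tmul (R := cubesSubalgebra k)
    (⟨X ^ 3, X_pow_three_mem⟩ : cubesSubalgebra k) ((X : k⟦X⟧) ^ m) ((X : k⟦X⟧) ^ n)
  rw [pow_add, mul_comm]
  exact hshift ▸ tmul_mem_tensorImage (hV3 _) _

section CharThree

variable [CharP k 3]

theorem deltaTensor_sq :
    deltaTensor k ^ 2 = (X ^ 2) ⊗ₜ[cubesSubalgebra k] (1 : k⟦X⟧) + (X : k⟦X⟧) ⊗ₜ X
      + (1 : k⟦X⟧) ⊗ₜ (X ^ 2) := by
  have h3 : (3 : k⟦X⟧ ⊗[cubesSubalgebra k] k⟦X⟧) = 0 := by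
    rw [← map_ofNat ((includeLeftRingHom (R := cubesSubalgebra k) (B := k⟦X⟧)).comp C) 3,
      CharP.ofNat_eq_zero, map_zero]
  have hxx : ((X : k⟦X⟧) ⊗ₜ[cubesSubalgebra k] (1 : k⟦X⟧)) * (X ⊗ₜ 1) = (X ^ 2) ⊗ₜ 1 := by
    rw [tmul_mul_tmul, one_mul, sq]
  have hxy : ((X : k⟦X⟧) ⊗ₜ[cubesSubalgebra k] (1 : k⟦X⟧)) * (1 ⊗ₜ X) = X ⊗ₜ X := by
    rw [tmul_mul_tmul, one_mul, mul_one]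
  have hyy : ((1 : k⟦X⟧) ⊗ₜ[cubesSubalgebra k] (X : k⟦X⟧)) * (1 ⊗ₜ X) = 1 ⊗ₜ (X ^ 2) := by
    rw [tmul_mul_tmul, one_mul, sq]
  rw [deltaTensor]
  linear_combination hxx - 2 * hxy + hyy - ((X : k⟦X⟧) ⊗ₜ[cubesSubalgebra k] (X : k⟦X⟧)) * h3

theorem deltaTensor_sq_mul_one_tmul_X_pow (i : ℕ) :
    deltaTensor k ^ 2 * ((1 : k⟦X⟧) ⊗ₜ[cubesSubalgebra k] (X ^ i))
      = (X ^ 2) ⊗ₜ (X ^ i) + (X : k⟦X⟧) ⊗ₜ (X ^ (i + 1)) + (1 : k⟦X⟧) ⊗ₜ (X ^ (i + 2)) := by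
  rw [deltaTensor_sq]
  simp only [add_mul, tmul_mul_tmul, one_mul, mul_one, ← pow_succ', ← pow_add, add_comm 2 i]

theorem deltaTensor_sq_mul_mem_tensorImage_iff (hV3 : ∀ b : k⟦X⟧, X ^ 3 * b ∈ V) (i : ℕ) :
    deltaTensor k ^ 2 * ((1 : k⟦X⟧) ⊗ₜ[cubesSubalgebra k] (X ^ i)) ∈ tensorImage k V ↔
      ∀ m ∈ Finset.Ico i 3, X ^ m ∈ V := by
  rw [deltaTensor_sq_mul_one_tmul_X_pow]
  constructor
  · intro h m hm
    rw [Finset.mem_Ico] at hm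
    have := tensorCoeff_eq_zero_of_mem hV3 (i + 2 - m) (by omega) h
    simp only [map_add, tensorCoeff_tmul, coeff_X_pow] at this
    obtain ⟨him, hm3⟩ := hm
    interval_cases m <;> interval_cases i <;> simpa using this
  · intro h
    have hterm : ∀ m ≤ 2, ((X : k⟦X⟧) ^ m) ⊗ₜ[cubesSubalgebra k] ((X : k⟦X⟧) ^ (i + 2 - m))
        ∈ tensorImage k V := fun m hm =>
      X_pow_tmul_X_pow_mem hV3 <|
        if him : i ≤ m then .inl (h m (Finset.mem_Ico.mpr ⟨him, by omega⟩)) else .inr (by omega)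
    simpa [add_comm] using
      add_mem (add_mem (hterm 2 le_rfl) (hterm 1 one_le_two)) (hterm 0 zero_le_two)

end CharThree

end cubesSubalgebra

theorem delta_sq_membership_in_tensor_general
    (k : Type) [Field k] [CharP k 3]
    (V : Submodule (cubesSubalgebra k) (PowerSeries k))
    (hV : Nonempty ((PowerSeries k ⧸ V.restrictScalars k) ≃ₗ[k] k)) :
    deltaTensor k ^ 2 ∉ tensorImage k V ∧
    (deltaTensor k ^ 2 * (1 ⊗ₜ[cubesSubalgebra k] PowerSeries.X) ∈ tensorImage k V ↔
      ((PowerSeries.X : PowerSeries k) ∈ V ∧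
        (PowerSeries.X : PowerSeries k) ^ 2 ∈ V)) ∧
    (deltaTensor k ^ 2 * (1 ⊗ₜ[cubesSubalgebra k] PowerSeries.X ^ 2) ∈
        tensorImage k V ↔ (PowerSeries.X : PowerSeries k) ^ 2 ∈ V) ∧
    deltaTensor k ^ 2 * (1 ⊗ₜ[cubesSubalgebra k] PowerSeries.X ^ 3) ∈
      tensorImage k V := by
  obtain ⟨e⟩ := hV
  have hV3 := cubesSubalgebra.X_pow_three_mul_mem V e
  have hiff := cubesSubalgebra.deltaTensor_sq_mul_mem_tensorImage_iff hV3
  have hVtop : V ≠ ⊤ := fun h => Submodule.Quotient.nontrivial_iff.mp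
    e.symm.injective.nontrivial (by rw [h, Submodule.restrictScalars_top])
  simp only [Algebra.TensorProduct.tmul_pow, one_pow]
  refine ⟨fun h => hVtop (cubesSubalgebra.eq_top_of_X_pow_mem hV3 ?_), ?_, ?_, ?_⟩
  · simpa using (hiff 0).mp (by simpa [← Algebra.TensorProduct.one_def] using h)
  · simpa [show Finset.Ico 1 3 = {1, 2} by decide] using hiff 1
  · simpa [show Finset.Ico 2 3 = {2} by decide] using hiff 2
  · simpa using hiff 3

/-- Let `k` be an algebraically closed field with `char k = 3`,
`A = k[[t³]] ⊆ B = k[[t]]`, and `V ⊆ B` an `A`-submodule with `B/V ≅ k` as `k`-vector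
spaces. Then in `B ⊗_A B`, with `δ = t ⊗ 1 - 1 ⊗ t`: (a) `δ² ∉ V ⊗_A B`;
(b) `δ²·(1 ⊗ t) ∈ V ⊗_A B` iff `{t, t²} ⊆ V`; (c) `δ²·(1 ⊗ t²) ∈ V ⊗_A B` iff
`t² ∈ V`; (d) `δ²·(1 ⊗ t³) ∈ V ⊗_A B`. -/
theorem delta_sq_membership_in_tensor
    (k : Type) [Field k] [IsAlgClosed k] [CharP k 3]
    (V : Submodule (cubesSubalgebra k) (PowerSeries k))
    (hV : Nonempty ((PowerSeries k ⧸ V.restrictScalars k) ≃ₗ[k] k)) :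
    deltaTensor k ^ 2 ∉ tensorImage k V ∧
    (deltaTensor k ^ 2 * (1 ⊗ₜ[cubesSubalgebra k] PowerSeries.X) ∈ tensorImage k V ↔
      ((PowerSeries.X : PowerSeries k) ∈ V ∧
        (PowerSeries.X : PowerSeries k) ^ 2 ∈ V)) ∧
    (deltaTensor k ^ 2 * (1 ⊗ₜ[cubesSubalgebra k] PowerSeries.X ^ 2) ∈
        tensorImage k V ↔ (PowerSeries.X : PowerSeries k) ^ 2 ∈ V) ∧
    deltaTensor k ^ 2 * (1 ⊗ₜ[cubesSubalgebra k] PowerSeries.X ^ 3) ∈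
      tensorImage k V :=
  delta_sq_membership_in_tensor_general k V hV
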